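/- Let θ be odd with θ(u+1) = -θ(u), and let c_N be as in the duality formula. Then c_N(z₁,…,z_N | w₁,…,w_{N-1}, z_N | h) = -[θ(h-N/2+1)/θ(h+1/2)] · ∏_{j=1}^{N-1} [θ(z_N-w_j+1/2)/θ(z_N-w_j)] · ∏_{j=1}^{N-1} [θ(z_j-z_N+1/2)/θ(z_j-z_N)] · c_{N-1}(z₁,…,z_{N-1} | w₁,…,w_{N-1} | h + 1/2), wherever all denominators are nonzero. -/

import Mathlib

/-!
`c_N` is an `h`-dependent prefactor times a product over pairs `j < k`. The pairs with
`k = N` split off as a last column, which for `w_N = z_N` is exactly the product of the two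
`∏_{j<N}` factors. In the prefactor, replacing `h` by `h + 1/2` and `N` by `N - 1` shifts the
numerator and denominator products by one index; the boundary factors that remain are matched
by the quasi-periodicity `θ(u + 1) = -θ(u)`.
-/

noncomputable def cfun (θ : ℂ → ℂ) (N : ℕ) (z w : Fin N → ℂ) (h : ℂ) : ℂ :=
  (θ h * ∏ j : Fin N, θ (h - (((j : ℕ) : ℂ) + 1) / 2 + 1))
    / (θ (h - (N : ℂ) / 2)
        * ∏ j : Fin N, θ (h + ((N : ℂ) + 1) / 2 - (((j : ℕ) : ℂ) + 1)))
    * ∏ j : Fin N, ∏ k : Fin N,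
        if j < k then
          θ (z j - z k + 1/2) * θ (w k - w j + 1/2)
            / (θ (z j - z k) * θ (w k - w j))
        else 1

theorem Fin.prod_prod_ite_lt_succ {M : Type*} [CommMonoid M] (n : ℕ)
    (f : Fin (n + 1) → Fin (n + 1) → M) :
    ∏ j, ∏ k, (if j < k then f j k else 1)
      = (∏ j : Fin n, ∏ k : Fin n, if j < k then f j.castSucc k.castSucc else 1)
        * ∏ j : Fin n, f j.castSucc (Fin.last n) := by
  rw [Fin.prod_univ_castSucc,
    Finset.prod_eq_one fun k _ => if_neg (Fin.le_last k).not_gt, mul_one,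
    ← Finset.prod_mul_distrib]
  refine Finset.prod_congr rfl fun j _ => ?_
  rw [Fin.prod_univ_castSucc, if_pos (Fin.castSucc_lt_last j)]
  simp only [Fin.castSucc_lt_castSucc_iff]

section

variable (θ : ℂ → ℂ)

noncomputable def cfunNum (N : ℕ) (h : ℂ) : ℂ :=
  θ h * ∏ j : Fin N, θ (h - (((j : ℕ) : ℂ) + 1) / 2 + 1)

noncomputable def cfunDen (N : ℕ) (h : ℂ) : ℂ :=
  θ (h - (N : ℂ) / 2) * ∏ j : Fin N, θ (h + ((N : ℂ) + 1) / 2 - (((j : ℕ) : ℂ) + 1))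

noncomputable def cfunCross (N : ℕ) (z w : Fin N → ℂ) : ℂ :=
  ∏ j : Fin N, ∏ k : Fin N,
    if j < k then
      θ (z j - z k + 1/2) * θ (w k - w j + 1/2) / (θ (z j - z k) * θ (w k - w j))
    else 1

theorem cfun_eq_cfunNum_div_cfunDen_mul_cfunCross (N : ℕ) (z w : Fin N → ℂ) (h : ℂ) :
    cfun θ N z w h = cfunNum θ N h / cfunDen θ N h * cfunCross θ N z w :=
  rfl

theorem cfunCross_succ (n : ℕ) (z w : Fin (n + 1) → ℂ) :
    cfunCross θ (n + 1) z w
      = cfunCross θ n (z ∘ Fin.castSucc) (w ∘ Fin.castSucc)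
        * ∏ j : Fin n, θ (z j.castSucc - z (Fin.last n) + 1/2)
            * θ (w (Fin.last n) - w j.castSucc + 1/2)
            / (θ (z j.castSucc - z (Fin.last n)) * θ (w (Fin.last n) - w j.castSucc)) :=
  Fin.prod_prod_ite_lt_succ n _

variable {θ}

theorem cfunNum_succ (hper : ∀ u : ℂ, θ (u + 1) = -θ u) (n : ℕ) (h : ℂ) :
    θ (h + 1/2) * cfunNum θ (n + 1) h
      = θ (h - (n : ℂ) / 2) * θ (h - ((n : ℂ) + 1) / 2 + 1) * cfunNum θ n (h + 1/2) := by
  -- Both products are pieces of `∏_{m ≤ n+1} g m`, peeled at opposite ends.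
  set g : ℕ → ℂ := fun m => θ (h - (m : ℂ) / 2 + 1)
  have hshift : ∏ j : Fin (n + 1), θ (h - (((j : ℕ) : ℂ) + 1) / 2 + 1)
      = ∏ m ∈ Finset.range (n + 1), g (m + 1) := by
    rw [← Fin.prod_univ_eq_prod_range]
    exact Finset.prod_congr rfl fun j _ => by simp only [g]; push_cast; rfl
  have hhalf : ∏ j : Fin n, θ (h + 1/2 - (((j : ℕ) : ℂ) + 1) / 2 + 1)
      = ∏ m ∈ Finset.range n, g m := by
    rw [← Fin.prod_univ_eq_prod_range]
    exact Finset.prod_congr rfl fun j _ => by simp only [g]; ring_nf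
  have hg0 : g 0 = -θ h := by simpa [g] using hper h
  have hgn : g n = -θ (h - (n : ℂ) / 2) := hper _
  have hgn1 : g (n + 1) = θ (h - ((n : ℂ) + 1) / 2 + 1) := by simp only [g]; push_cast; rfl
  have htotal : (∏ m ∈ Finset.range (n + 1), g (m + 1)) * g 0
      = (∏ m ∈ Finset.range n, g m) * g n * g (n + 1) := by
    rw [← Finset.prod_range_succ', Finset.prod_range_succ, Finset.prod_range_succ]
  rw [hg0, hgn, hgn1] at htotal
  simp only [cfunNum, hshift, hhalf]
  linear_combination -θ (h + 1/2) * htotal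

theorem cfunDen_succ (hper : ∀ u : ℂ, θ (u + 1) = -θ u) (n : ℕ) (h : ℂ) :
    cfunDen θ (n + 1) h = -θ (h - (n : ℂ) / 2) * cfunDen θ n (h + 1/2) := by
  have hfirst : θ (h + 1/2 - (n : ℂ) / 2) = -θ (h - ((n : ℂ) + 1) / 2) := by
    rw [← hper]; ring_nf
  have hprod : ∏ j : Fin n, θ (h + (((n + 1 : ℕ) : ℂ) + 1) / 2 - (((j.castSucc : ℕ) : ℂ) + 1))
      = ∏ j : Fin n, θ (h + 1/2 + ((n : ℂ) + 1) / 2 - (((j : ℕ) : ℂ) + 1)) :=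
    Finset.prod_congr rfl fun j _ => by push_cast [Fin.val_castSucc]; ring_nf
  have hlast :
      h + (((n + 1 : ℕ) : ℂ) + 1) / 2 - (((Fin.last n : ℕ) : ℂ) + 1) = h - (n : ℂ) / 2 := by
    push_cast; ring
  rw [cfunDen, cfunDen, Fin.prod_univ_castSucc, hprod, hlast, hfirst]
  push_cast
  ring

theorem cfunNum_div_cfunDen_succ (hper : ∀ u : ℂ, θ (u + 1) = -θ u) (n : ℕ) (h : ℂ)
    (hn : θ (h - (n : ℂ) / 2) ≠ 0) (hhalf : θ (h + 1/2) ≠ 0) :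
    cfunNum θ (n + 1) h / cfunDen θ (n + 1) h
      = -(θ (h - ((n : ℂ) + 1) / 2 + 1) / θ (h + 1/2))
        * (cfunNum θ n (h + 1/2) / cfunDen θ n (h + 1/2)) := by
  have hnum : cfunNum θ (n + 1) h
      = θ (h - (n : ℂ) / 2) * θ (h - ((n : ℂ) + 1) / 2 + 1) * cfunNum θ n (h + 1/2)
        / θ (h + 1/2) := by
    rw [← cfunNum_succ hper, mul_div_cancel_left₀ _ hhalf]
  rw [hnum, cfunDen_succ hper, mul_assoc, mul_div_assoc, neg_mul, ← mul_neg,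
    mul_div_mul_left _ _ hn]
  ring

end

theorem cfun_recursion_wN_eq_zN_general (θ : ℂ → ℂ)
    (hper : ∀ u : ℂ, θ (u + 1) = -θ u)
    (n : ℕ) (z w : Fin (n+1) → ℂ) (h : ℂ)
    (hw : w (Fin.last n) = z (Fin.last n))
    (hh2 : ∀ j : Fin (n+1), θ (h + ((n : ℂ) + 2) / 2 - (((j : ℕ) : ℂ) + 1)) ≠ 0)
    (hh3 : θ (h + 1/2) ≠ 0) :
    cfun θ (n+1) z w h
      = -(θ (h - ((n : ℂ) + 1) / 2 + 1) / θ (h + 1/2))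
        * (∏ j : Fin n, θ (z (Fin.last n) - w j.castSucc + 1/2)
            / θ (z (Fin.last n) - w j.castSucc))
        * (∏ j : Fin n, θ (z j.castSucc - z (Fin.last n) + 1/2)
            / θ (z j.castSucc - z (Fin.last n)))
        * cfun θ n (z ∘ Fin.castSucc) (w ∘ Fin.castSucc) (h + 1/2) := by
  have hn : θ (h - (n : ℂ) / 2) ≠ 0 := by
    convert hh2 (Fin.last n) using 2
    push_cast; ring
  rw [cfun_eq_cfunNum_div_cfunDen_mul_cfunCross, cfun_eq_cfunNum_div_cfunDen_mul_cfunCross,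
    cfunNum_div_cfunDen_succ hper n h hn hh3, cfunCross_succ, hw]
  simp only [mul_div_mul_comm, Finset.prod_mul_distrib]
  ring

theorem cfun_recursion_wN_eq_zN (θ : ℂ → ℂ)
    (hodd : ∀ u : ℂ, θ (-u) = -θ u)
    (hper : ∀ u : ℂ, θ (u + 1) = -θ u)
    (n : ℕ) (z w : Fin (n+1) → ℂ) (h : ℂ)
    (hw : w (Fin.last n) = z (Fin.last n))
    (hz : ∀ j k : Fin (n+1), j ≠ k → θ (z j - z k) ≠ 0)
    (hww : ∀ j k : Fin (n+1), j ≠ k → θ (w k - w j) ≠ 0)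
    (hh1 : θ (h - ((n : ℂ) + 1) / 2) ≠ 0)
    (hh2 : ∀ j : Fin (n+1), θ (h + ((n : ℂ) + 2) / 2 - (((j : ℕ) : ℂ) + 1)) ≠ 0)
    (hh3 : θ (h + 1/2) ≠ 0)
    (hh4 : θ (h + 1 - ((n : ℂ) + 1) / 2) ≠ 0) :
    cfun θ (n+1) z w h
      = -(θ (h - ((n : ℂ) + 1) / 2 + 1) / θ (h + 1/2))
        * (∏ j : Fin n, θ (z (Fin.last n) - w j.castSucc + 1/2)
            / θ (z (Fin.last n) - w j.castSucc))
        * (∏ j : Fin n, θ (z j.castSucc - z (Fin.last n) + 1/2)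
            / θ (z j.castSucc - z (Fin.last n)))
        * cfun θ n (z ∘ Fin.castSucc) (w ∘ Fin.castSucc) (h + 1/2) :=
  cfun_recursion_wN_eq_zN_general θ hper n z w h hw hh2 hh3
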